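/- For odd n ≥ 3, with λ ≥ 0 and μ > 0, the infinity operator norm of the product ∏_{m=0}^{(n-3)/2} S_{n-2m} (with S as in the power-series recursion) is at most 3(λ+μ)(n+1) / (μ · 2ⁿ · ((n-1)/2)!²). -/

import Mathlib

/-!
Writing `a = λ/μ`, the product `S_{2k+1} S_{2k-1} ⋯ S_3` has the closed form
`(2ᵏ k!)⁻² · [[-(k-1+ka)/(k+1), -(a+1)k/(2(k+1))], [2k(a+1), k+1+ka]]`, checked by
induction on `k` (at `n = 2k+3` the scalar gains the factor `(n-1)⁻² = (2k+2)⁻²`). For `k ≥ 1`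
and `a ≥ 0` both absolute row sums of the bracketed matrix are at most `3(a+1)(k+1)`, and the
`∞`-operator norm is bounded by the largest absolute row sum.
-/

open Matrix BigOperators

/-- The `∞`-norm of a vector. -/
noncomputable def vecInf {N : ℕ} (x : Fin N → ℝ) : ℝ := ⨆ i, |x i|

/-- The operator `∞`-norm of a square matrix. -/
noncomputable def opInf {N : ℕ} (A : Matrix (Fin N) (Fin N) ℝ) : ℝ :=
  sSup {c : ℝ | ∃ x : Fin N → ℝ, x ≠ 0 ∧ c = vecInf (A.mulVec x) / vecInf x}

/-- The `2×2` matrix `S_n` appearing in the power-series recursion. -/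
noncomputable def Smat (lam mu : ℝ) (n : ℕ) : Matrix (Fin 2) (Fin 2) ℝ :=
  !![-(lam / mu) * (1 / (((n : ℝ) + 1) * ((n : ℝ) - 1))),
       -((lam + mu) / mu) * (1 / (((n : ℝ) + 1) * ((n : ℝ) - 1) ^ 2));
     ((lam + mu) / mu) * (1 / ((n : ℝ) - 1)),
       ((lam + 2 * mu) / mu) * (1 / ((n : ℝ) - 1) ^ 2)]

open Nat

lemma opInf_le_of_row_sum_le {N : ℕ} {A : Matrix (Fin N) (Fin N) ℝ} {C : ℝ} (hC : 0 ≤ C)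
    (hrow : ∀ i, ∑ j, |A i j| ≤ C) : opInf A ≤ C := by
  refine Real.sSup_le ?_ hC
  rintro c ⟨x, hx, rfl⟩
  have hle : ∀ i, |x i| ≤ vecInf x := le_ciSup (Set.finite_range _).bddAbove
  obtain ⟨j, hj⟩ := Function.ne_iff.1 hx
  have hpos : 0 < vecInf x := (abs_pos.2 hj).trans_le (hle j)
  have : Nonempty (Fin N) := ⟨j⟩
  rw [div_le_iff₀ hpos]
  refine ciSup_le fun i => ?_
  calc |A.mulVec x i| ≤ ∑ j, |A i j| * |x j| := by
        simpa only [mulVec, dotProduct, abs_mul] using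
          Finset.abs_sum_le_sum_abs (fun j => A i j * x j) Finset.univ
    _ ≤ ∑ j, |A i j| * vecInf x := by gcongr with j; exact hle j
    _ = (∑ j, |A i j|) * vecInf x := by rw [Finset.sum_mul]
    _ ≤ C * vecInf x := by gcongr; exact hrow i

/-- `smatProd lam mu k = S_{2k+1} S_{2k-1} ⋯ S_3`. -/
noncomputable def smatProd (lam mu : ℝ) (k : ℕ) : Matrix (Fin 2) (Fin 2) ℝ :=
  ((List.range k).map fun m => Smat lam mu (2 * k + 1 - 2 * m)).prod

section SmatProd

variable {lam mu : ℝ}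

lemma smatProd_succ (k : ℕ) :
    smatProd lam mu (k + 1) = Smat lam mu (2 * k + 3) * smatProd lam mu k := by
  rw [smatProd, List.range_succ_eq_map, List.map_cons, List.prod_cons, List.map_map]
  congr 3
  funext m
  simp only [Function.comp_apply]
  congr 1
  omega

lemma smatProd_eq (hmu : mu ≠ 0) (k : ℕ) :
    smatProd lam mu k = (((2 ^ k * k ! : ℕ) : ℝ) ^ 2)⁻¹ •
      !![-((k - 1) + k * (lam / mu)) / (k + 1), -((lam / mu + 1) * k) / (2 * (k + 1));
         2 * k * (lam / mu + 1), (k + 1) + k * (lam / mu)] := by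
  induction k with
  | zero => ext i j; fin_cases i <;> fin_cases j <;> simp [smatProd]
  | succ k ih =>
    rw [smatProd_succ, ih, Matrix.mul_smul, Smat, Matrix.mul_fin_two, Matrix.smul_of,
      Matrix.smul_of]
    have hsub : ((2 * k + 3 : ℕ) : ℝ) - 1 = 2 * (k + 1) := by push_cast; ring
    have hadd : ((2 * k + 3 : ℕ) : ℝ) + 1 = 2 * (k + 2) := by push_cast; ring
    have hk1 : (k : ℝ) + 1 ≠ 0 := by positivity
    have hk2 : (k : ℝ) + 2 ≠ 0 := by positivity
    rw [hsub, hadd]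
    ext i j
    fin_cases i <;> fin_cases j <;>
    · simp only [smul_cons, smul_eq_mul, smul_empty, of_apply, cons_val', cons_val_zero,
        cons_val_one, cons_val_fin_one, Fin.isValue, Fin.zero_eta, Fin.mk_one]
      push_cast [pow_succ, factorial_succ]
      field_simp
      ring

end SmatProd

lemma opInf_smatProd_le {lam mu : ℝ} (hl : 0 ≤ lam) (hmu : 0 < mu) {k : ℕ} (hk : 1 ≤ k) :
    opInf (smatProd lam mu k) ≤
      (((2 ^ k * k ! : ℕ) : ℝ) ^ 2)⁻¹ * (3 * (lam / mu + 1) * (k + 1)) := by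
  rw [smatProd_eq hmu.ne']
  set a := lam / mu
  have ha : 0 ≤ a := div_nonneg hl hmu.le
  have hk' : (1 : ℝ) ≤ k := by exact_mod_cast hk
  refine opInf_le_of_row_sum_le (by positivity) fun i => ?_
  simp only [Matrix.smul_apply, smul_eq_mul, abs_mul, ← Finset.mul_sum, abs_inv, abs_pow,
    Nat.abs_cast]
  gcongr
  fin_cases i <;>
    simp only [Fin.sum_univ_two, of_apply, cons_val', cons_val_zero, cons_val_one,
      cons_val_fin_one, Fin.isValue, Fin.zero_eta, Fin.mk_one, abs_mul, abs_ofNat, abs_cast]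
  · have hk1 : (0 : ℝ) < k + 1 := by positivity
    have hk2 : (0 : ℝ) < 2 * (k + 1) := by positivity
    have hx : -((k - 1) + k * a) ≤ 0 := by nlinarith
    have hy : -((a + 1) * k) ≤ 0 := by nlinarith
    rw [abs_div, abs_div, abs_of_pos hk1, abs_of_pos hk2, abs_of_nonpos hx, abs_of_nonpos hy,
      div_add_div _ _ hk1.ne' hk2.ne', div_le_iff₀ (mul_pos hk1 hk2)]
    have hq : (0 : ℝ) ≤ 6 * (k + 1) ^ 2 - 3 * (k + 1) + 3 := by nlinarith
    nlinarith [mul_nonneg (mul_nonneg hk1.le (by linarith : (0 : ℝ) ≤ a + 1)) hq]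
  · rw [abs_of_nonneg (by positivity), abs_of_nonneg (by positivity)]
    nlinarith

/-- For odd `n ≥ 3`, the `∞`-operator norm of the product `∏_{m=0}^{(n-3)/2} S_{n-2m}`
is at most `3(λ+μ)(n+1) / (μ 2ⁿ ((n-1)/2)!²)`. -/
theorem opInf_Smat_prod_bound (lam mu : ℝ) (hl : 0 ≤ lam) (hmu : 0 < mu)
    (n : ℕ) (hn : Odd n) (h3 : 3 ≤ n) :
    opInf (((List.range ((n - 3) / 2 + 1)).map (fun m => Smat lam mu (n - 2 * m))).prod)
      ≤ 3 * (lam + mu) * ((n : ℝ) + 1) /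
          (mu * 2 ^ n * ((Nat.factorial ((n - 1) / 2) : ℝ)) ^ 2) := by
  obtain ⟨k, rfl⟩ := hn
  have hk : 1 ≤ k := by omega
  rw [show (2 * k + 1 - 3) / 2 + 1 = k by omega, show (2 * k + 1 - 1) / 2 = k by omega]
  change opInf (smatProd lam mu k) ≤ _
  refine (opInf_smatProd_le hl hmu hk).trans_eq ?_
  push_cast
  field_simp
  ring
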